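/- arXiv:0708.3539 — 8 statements merged into one kernel-verified Lean document; each statement's English description precedes it below -/
import Mathlib

section
/- Let L be a finite lattice and x ∈ L. Then x is left modular if and only if for every cover relation y ⋖ z in L, exactly one of the equalities x ⊔ z = x ⊔ y and x ⊓ z = x ⊓ y holds. -/
/-- In a finite lattice `L`, an element `x` is left modular iff for every
cover relation `y ⋖ z`, exactly one of `x ⊔ z = x ⊔ y` and `x ⊓ z = x ⊓ y`
holds. -/
theorem leftModular_iff_covby_xor {L : Type*} [Lattice L] [Fintype L] (x : L) :
    (∀ y z : L, y ≤ z → (y ⊔ x) ⊓ z = y ⊔ (x ⊓ z)) ↔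
      (∀ y z : L, y ⋖ z → Xor' (x ⊔ z = x ⊔ y) (x ⊓ z = x ⊓ y)) := by
  constructor
  · intro H y z hyz
    have hle := hyz.le
    -- not both
    have hnotboth : ¬ (x ⊔ z = x ⊔ y ∧ x ⊓ z = x ⊓ y) := by
      rintro ⟨hA, hB⟩
      have h1 : (y ⊔ x) ⊓ z = z := by
        have hz : z ≤ y ⊔ x := by
          calc z ≤ x ⊔ z := le_sup_right
          _ = x ⊔ y := hA
          _ = y ⊔ x := sup_comm x y
        exact inf_eq_right.mpr hz
      have h2 : y ⊔ (x ⊓ z) = y := by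
        have : x ⊓ z ≤ y := hB ▸ inf_le_right
        exact sup_eq_left.mpr this
      exact hyz.lt.ne' (by rw [← h1, H y z hle, h2])
    -- at least one
    have hor : x ⊔ z = x ⊔ y ∨ x ⊓ z = x ⊓ y := by
      by_contra hcon
      push_neg at hcon
      obtain ⟨hA, hB⟩ := hcon
      have h1 : ¬ x ⊓ z ≤ y := fun h =>
        hB (le_antisymm (le_inf inf_le_left h) (inf_le_inf_left x hle))
      have h2 : y < y ⊔ (x ⊓ z) := left_lt_sup.mpr h1
      rcases (sup_le hle inf_le_right : y ⊔ (x ⊓ z) ≤ z).lt_or_eq with hlt | heq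
      · exact hyz.2 h2 hlt
      · have hz : z ≤ x ⊔ y := by
          rw [← heq]; exact sup_le (le_sup_right) (inf_le_left.trans le_sup_left)
        exact hA (le_antisymm (sup_le le_sup_left hz) (sup_le_sup_left hle x))
    rcases hor with hA | hB
    · exact Or.inl ⟨hA, fun hB => hnotboth ⟨hA, hB⟩⟩
    · exact Or.inr ⟨hB, fun hA => hnotboth ⟨hA, hB⟩⟩
  · intro H y z hyz
    refine le_antisymm ?_ (le_inf (sup_le_sup_left inf_le_left y) (sup_le hyz inf_le_right))
    by_contra hcon
    have hab : y ⊔ (x ⊓ z) < (y ⊔ x) ⊓ z :=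
      lt_of_le_of_ne (le_inf (sup_le_sup_left inf_le_left y) (sup_le hyz inf_le_right))
        (fun h => hcon h.ge)
    obtain ⟨c, hac, hcb⟩ := hab.exists_covby_le
    set a := y ⊔ (x ⊓ z) with ha
    have hxc_inf : x ⊓ c = x ⊓ a := by
      refine le_antisymm (le_inf inf_le_left ?_) (inf_le_inf_left x hac.le)
      calc x ⊓ c ≤ x ⊓ z := inf_le_inf_left x (hcb.trans inf_le_right)
      _ ≤ a := le_sup_right
    have hxc_sup : x ⊔ c = x ⊔ a := by
      refine le_antisymm (sup_le le_sup_left ?_) (sup_le_sup_left hac.le x)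
      calc c ≤ y ⊔ x := hcb.trans inf_le_left
      _ ≤ x ⊔ a := sup_le ((le_sup_left : y ≤ a).trans le_sup_right) le_sup_left
    rcases H a c hac with ⟨_, hB⟩ | ⟨_, hA⟩
    · exact hB hxc_inf
    · exact hA hxc_sup
end

section
/- Let L be a finite lattice and let ⊥ = x_0 < x_1 < ⋯ < x_k = ⊤ be a chain in L each of whose elements is left modular. Then every cover relation y ⋖ z in L is weakly separated by x_{i+1}/x_i for exactly one index i with 0 ≤ i < k; that is, there is a unique i such that x_i ⊓ z = x_i ⊓ y and x_{i+1} ⊔ z = x_{i+1} ⊔ y. -/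
/-- Given a chain `⊥ = x₀ < x₁ < ⋯ < x_k = ⊤` of left modular elements of a
finite lattice `L`, every cover relation `y ⋖ z` is weakly separated by
`x_{i+1}/x_i` for exactly one index `i`: there is a unique `i` with
`x_i ⊓ z = x_i ⊓ y` and `x_{i+1} ⊔ z = x_{i+1} ⊔ y`. -/
theorem covby_weaklySeparated_existsUnique {L : Type*} [Lattice L]
    [BoundedOrder L] [Fintype L] {k : ℕ} (x : Fin (k + 1) → L)
    (hmono : StrictMono x) (hbot : x 0 = ⊥) (htop : x (Fin.last k) = ⊤)
    (hlm : ∀ i : Fin (k + 1), ∀ y z : L, y ≤ z →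
      (y ⊔ x i) ⊓ z = y ⊔ (x i ⊓ z)) :
    ∀ y z : L, y ⋖ z →
      ∃! i : Fin k, x i.castSucc ⊓ z = x i.castSucc ⊓ y ∧
        x i.succ ⊔ z = x i.succ ⊔ y := by
  classical
  intro y z hyz
  have hlt : y < z := hyz.lt
  set P : Fin (k + 1) → Prop := fun i => x i ⊓ z = x i ⊓ y with hPdef
  have hP0 : P 0 := by simp [hPdef, hbot]
  have hPk : ¬ P (Fin.last k) := by
    simp only [hPdef, htop, top_inf_eq]
    exact hlt.ne'
  have hdown : ∀ i j : Fin (k + 1), i ≤ j → P j → P i := by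
    intro i j hij hj
    have hxij : x i ≤ x j := hmono.monotone hij
    refine le_antisymm (le_inf inf_le_left ?_) (inf_le_inf_left _ hlt.le)
    calc x i ⊓ z ≤ x j ⊓ z := inf_le_inf_right _ hxij
      _ = x j ⊓ y := hj
      _ ≤ y := inf_le_right
  have hPJ : ∀ i, ¬ P i → x i ⊔ z = x i ⊔ y := by
    intro i hi
    have h1 : ¬ (x i ⊓ z ≤ y) := by
      intro h
      exact hi (le_antisymm (le_inf inf_le_left h) (inf_le_inf_left _ hlt.le))
    have h2 : y < y ⊔ (x i ⊓ z) := by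
      rcases lt_or_eq_of_le (le_sup_left : y ≤ y ⊔ (x i ⊓ z)) with h | h
      · exact h
      · exact absurd (sup_eq_left.mp h.symm) h1
    have h3 : y ⊔ (x i ⊓ z) ≤ z := sup_le hlt.le inf_le_right
    have h4 : y ⊔ (x i ⊓ z) = z := (hyz.eq_or_eq le_sup_left h3).resolve_left h2.ne'
    have h5 : z ≤ y ⊔ x i := by
      have hm := hlm i y z hlt.le
      rw [h4] at hm
      calc z = (y ⊔ x i) ⊓ z := hm.symm
        _ ≤ y ⊔ x i := inf_le_left
    refine le_antisymm ?_ (sup_le_sup_left hlt.le _)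
    exact sup_le le_sup_left (h5.trans (by rw [sup_comm]))
  have hJP : ∀ i, x i ⊔ z = x i ⊔ y → ¬ P i := by
    intro i hsup hi
    apply hlt.ne'
    calc z = z ⊓ (x i ⊔ z) := (inf_eq_left.mpr le_sup_right).symm
      _ = z ⊓ (y ⊔ x i) := by rw [hsup, sup_comm]
      _ = (y ⊔ x i) ⊓ z := inf_comm _ _
      _ = y ⊔ (x i ⊓ z) := hlm i y z hlt.le
      _ = y ⊔ (x i ⊓ y) := by rw [hi]
      _ = y := sup_eq_left.mpr inf_le_right
  -- find the transition index
  have hex : ∃ n, ∃ h : n < k + 1, ¬ P ⟨n, h⟩ := by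
    refine ⟨k, Nat.lt_succ_self k, ?_⟩
    simpa [Fin.last] using hPk
  set m := Nat.find hex with hmdef
  obtain ⟨hmlt, hmP⟩ := Nat.find_spec hex
  have hm0 : 0 < m := by
    rcases Nat.eq_zero_or_pos m with h | h
    swap
    · exact h
    · exfalso
      apply hmP
      have : (⟨m, hmlt⟩ : Fin (k + 1)) = 0 := by
        ext; simp [h]
      rw [this]; exact hP0
  have hmk : m ≤ k := Nat.lt_succ_iff.mp hmlt
  have hik : m - 1 < k := lt_of_lt_of_le (Nat.sub_lt hm0 one_pos) hmk
  refine ⟨⟨m - 1, hik⟩, ⟨?_, ?_⟩, ?_⟩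
  · -- P at castSucc = m - 1
    by_contra hc
    have := Nat.find_min hex (Nat.sub_lt hm0 one_pos)
    exact this ⟨lt_of_lt_of_le hik (Nat.le_succ k), hc⟩
  · -- J at succ = m
    have hsucc : (Fin.succ ⟨m - 1, hik⟩ : Fin (k + 1)) = ⟨m, hmlt⟩ := by
      ext
      simp only [Fin.succ_mk, Fin.val_mk]; omega
    rw [hsucc]
    exact hPJ _ hmP
  · intro j hj
    obtain ⟨hj1, hj2⟩ := hj
    have hjP : ¬ P j.succ := hJP _ hj2
    have hiP : P (⟨m - 1, hik⟩ : Fin k).castSucc := by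
      by_contra hc
      have := Nat.find_min hex (Nat.sub_lt hm0 one_pos)
      exact this ⟨lt_of_lt_of_le hik (Nat.le_succ k), hc⟩
    have hiJ : ¬ P (⟨m - 1, hik⟩ : Fin k).succ := by
      have hsucc : (Fin.succ ⟨m - 1, hik⟩ : Fin (k + 1)) = ⟨m, hmlt⟩ := by
        ext
        simp only [Fin.succ_mk, Fin.val_mk]; omega
      rw [hsucc]; exact hmP
    rcases lt_trichotomy j (⟨m - 1, hik⟩ : Fin k) with h | h | h
    · exfalso
      apply hjP
      apply hdown _ _ _ hiP
      have : (j : ℕ) + 1 ≤ m - 1 := h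
      simpa [Fin.le_def] using this
    · exact h
    · exfalso
      apply hiJ
      apply hdown _ _ _ hj1
      have : (m - 1 : ℕ) + 1 ≤ (j : ℕ) := h
      simpa [Fin.le_def] using this
end

section
/- Let L be a finite lattice, let ⊥ = x_0 < x_1 < ⋯ < x_k = ⊤ be a chain of left modular elements of L, and let w ≤ z in L. Suppose c satisfies w ≤ c < z, let i be an index with c ⊔ (x_i ⊓ z) = c and c ⊔ (x_{i+1} ⊓ z) ≠ c, and set c' = c ⊔ (x_{i+1} ⊓ z). Then for every cover relation y ⋖ y' with c ≤ y and y' ≤ c', one has x_{i+1} ⊔ y = x_{i+1} ⊔ y', x_i ⊔ y ≠ x_i ⊔ y', and x_i ⊓ y = x_i ⊓ y'; in particular, y ⋖ y' is weakly separated by x_{i+1}/x_i. -/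
/-!
Write `a = x_i`, `b = x_{i+1}`. From `c ⊔ (a ⊓ z) = c` we get `a ⊓ z ≤ c ≤ y`, and everything
happens below `z`. Joining with `b` identifies `y` and `y'` because `y' ≤ c ⊔ (b ⊓ z) ≤ y ⊔ b`;
meeting with `a` identifies them because `a ⊓ y' ≤ a ⊓ z ≤ y`. Joining with `a` separates them:
left modularity gives `(y ⊔ a) ⊓ z = y ⊔ (a ⊓ z) = y`, so `y' ≤ a ⊔ y` would force `y' ≤ y`.
-/

section

variable {L : Type*} [Lattice L]

def IsLeftModular (a : L) : Prop :=
  ∀ y z : L, y ≤ z → (y ⊔ a) ⊓ z = y ⊔ (a ⊓ z)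

namespace IsLeftModular

variable {a y y' z : L}

theorem sup_inf_eq_of_inf_le (ha : IsLeftModular a) (hyz : y ≤ z) (h : a ⊓ z ≤ y) :
    (y ⊔ a) ⊓ z = y := by
  rw [ha y z hyz, sup_eq_left.mpr h]

theorem sup_lt_sup_of_inf_le (ha : IsLeftModular a) (hyy' : y < y') (hy'z : y' ≤ z)
    (h : a ⊓ z ≤ y) : a ⊔ y < a ⊔ y' := by
  refine lt_of_le_of_ne (sup_le_sup_left hyy'.le a) fun heq => hyy'.not_ge ?_
  calc y' ≤ (y ⊔ a) ⊓ z := le_inf (le_sup_right.trans_eq (heq.symm.trans (sup_comm _ _))) hy'z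
    _ = y := ha.sup_inf_eq_of_inf_le (hyy'.le.trans hy'z) h

end IsLeftModular

end

theorem covers_in_step_weaklySeparated_general {L : Type*} [Lattice L]
    {k : ℕ} (x : Fin (k + 1) → L)
    (hlm : ∀ i : Fin (k + 1), ∀ y z : L, y ≤ z →
      (y ⊔ x i) ⊓ z = y ⊔ (x i ⊓ z))
    (z : L) (c : L) (hcz : c < z)
    (i : Fin k)
    (hi : c ⊔ (x i.castSucc ⊓ z) = c) :
    ∀ y y' : L, y ⋖ y' → c ≤ y → y' ≤ c ⊔ (x i.succ ⊓ z) →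
      x i.succ ⊔ y = x i.succ ⊔ y' ∧
      x i.castSucc ⊔ y ≠ x i.castSucc ⊔ y' ∧
      x i.castSucc ⊓ y = x i.castSucc ⊓ y' := by
  intro y y' hyy' hcy hy'
  have haz : x i.castSucc ⊓ z ≤ y := (sup_eq_left.mp hi).trans hcy
  have hy'z : y' ≤ z := hy'.trans (sup_le hcz.le inf_le_right)
  have hy'b : y' ≤ x i.succ ⊔ y :=
    hy'.trans (sup_le (hcy.trans le_sup_right) (inf_le_left.trans le_sup_left))
  refine ⟨sup_congr_left (hyy'.le.trans le_sup_right) hy'b,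
    (IsLeftModular.sup_lt_sup_of_inf_le (hlm i.castSucc) hyy'.lt hy'z haz).ne,
    inf_congr_left ?_ (inf_le_right.trans hyy'.le)⟩
  exact (inf_le_inf_left _ hy'z).trans haz

/-- Let `⊥ = x₀ < x₁ < ⋯ < x_k = ⊤` be a chain of left modular elements of a
finite lattice `L`, let `w ≤ z`, and let `w ≤ c < z`.  Suppose `i` is an index
with `c ⊔ (x_i ⊓ z) = c` and `c ⊔ (x_{i+1} ⊓ z) ≠ c`, and set
`c' = c ⊔ (x_{i+1} ⊓ z)`.  Then every cover relation `y ⋖ y'` with `c ≤ y` and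
`y' ≤ c'` satisfies `x_{i+1} ⊔ y = x_{i+1} ⊔ y'`, `x_i ⊔ y ≠ x_i ⊔ y'`, and
`x_i ⊓ y = x_i ⊓ y'`; in particular it is weakly separated by `x_{i+1}/x_i`. -/
theorem covers_in_step_weaklySeparated {L : Type*} [Lattice L]
    [BoundedOrder L] [Fintype L] {k : ℕ} (x : Fin (k + 1) → L)
    (hmono : StrictMono x) (hbot : x 0 = ⊥) (htop : x (Fin.last k) = ⊤)
    (hlm : ∀ i : Fin (k + 1), ∀ y z : L, y ≤ z →
      (y ⊔ x i) ⊓ z = y ⊔ (x i ⊓ z))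
    (w z : L) (hwz : w ≤ z) (c : L) (hwc : w ≤ c) (hcz : c < z)
    (i : Fin k)
    (hi : c ⊔ (x i.castSucc ⊓ z) = c)
    (hi' : c ⊔ (x i.succ ⊓ z) ≠ c) :
    ∀ y y' : L, y ⋖ y' → c ≤ y → y' ≤ c ⊔ (x i.succ ⊓ z) →
      x i.succ ⊔ y = x i.succ ⊔ y' ∧
      x i.castSucc ⊔ y ≠ x i.castSucc ⊔ y' ∧
      x i.castSucc ⊓ y = x i.castSucc ⊓ y' :=
  covers_in_step_weaklySeparated_general x hlm z c hcz i hi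
end

section
/- Let G be a group and let N ≤ M be normal subgroups of G with ⁅M, M⁆ ≤ N (so that M/N is abelian). Let E ≤ F be subgroups of G with M ⊔ E = M ⊔ F. Then for every subgroup K of G with N ≤ K ≤ M, E normalizes K if and only if F normalizes K; that is, E ≤ N_G(K) if and only if F ≤ N_G(K). -/
/-!
A subgroup `K` with `⁅M, M⁆ ≤ K ≤ M` is normalized by `M`, so the subgroups normalizing `K`
are exactly those whose join with `M` normalizes `K`; this depends on `E` only through `M ⊔ E`.
-/

namespace Subgroup

variable {G : Type*} [Group G]

theorem le_normalizer_of_commutator_le_of_le {H K : Subgroup G} (hHK : ⁅H, H⁆ ≤ K)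
    (hKH : K ≤ H) : H ≤ normalizer (K : Set G) :=
  le_normalizer_iff_commutator_le_right.mpr ((commutator_mono le_rfl hKH).trans hHK)

end Subgroup

theorem normalizes_iff_of_join_eq_general {G : Type*} [Group G]
    (N M : Subgroup G)
    (hcomm : ⁅M, M⁆ ≤ N)
    (E F : Subgroup G) (hjoin : M ⊔ E = M ⊔ F) :
    ∀ K : Subgroup G, N ≤ K → K ≤ M →
      (E ≤ Subgroup.normalizer (K : Set G) ↔ F ≤ Subgroup.normalizer (K : Set G)) := by
  intro K hNK hKM
  have hM : M ≤ Subgroup.normalizer (K : Set G) :=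
    Subgroup.le_normalizer_of_commutator_le_of_le (hcomm.trans hNK) hKM
  calc E ≤ Subgroup.normalizer (K : Set G)
      ↔ M ⊔ E ≤ Subgroup.normalizer (K : Set G) := by rw [sup_le_iff, and_iff_right hM]
    _ ↔ M ⊔ F ≤ Subgroup.normalizer (K : Set G) := by rw [hjoin]
    _ ↔ F ≤ Subgroup.normalizer (K : Set G) := by rw [sup_le_iff, and_iff_right hM]

/-- Let `N ≤ M` be normal subgroups of `G` with `⁅M, M⁆ ≤ N`, and let `E ≤ F`
be subgroups with `M ⊔ E = M ⊔ F`.  Then for every subgroup `K` with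
`N ≤ K ≤ M`, `E` normalizes `K` iff `F` normalizes `K`. -/
theorem normalizes_iff_of_join_eq {G : Type*} [Group G]
    (N M : Subgroup G) (hN : N.Normal) (hM : M.Normal) (hNM : N ≤ M)
    (hcomm : ⁅M, M⁆ ≤ N)
    (E F : Subgroup G) (hEF : E ≤ F) (hjoin : M ⊔ E = M ⊔ F) :
    ∀ K : Subgroup G, N ≤ K → K ≤ M →
      (E ≤ Subgroup.normalizer (K : Set G) ↔ F ≤ Subgroup.normalizer (K : Set G)) :=
  normalizes_iff_of_join_eq_general N M hcomm E F hjoin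
end

section
/- Let G be a group, let N ≤ M be normal subgroups of G, and let W ≤ Z be subgroups of G satisfying N ⊓ W = N ⊓ Z and M ⊔ W = M ⊔ Z. Then for every subgroup H with W ≤ H ≤ Z, one has (W ⊔ ((N ⊔ H) ⊓ M)) ⊓ Z = H. -/
/-- If `H` normalizes `K`, then every element of `H ⊔ K` factors as `h * k`. -/
lemma mem_sup_of_normalizes {G : Type*} [Group G] {H K : Subgroup G}
    (hc : ∀ h ∈ H, ∀ k ∈ K, h * k * h⁻¹ ∈ K) {x : G} (hx : x ∈ H ⊔ K) :
    ∃ h ∈ H, ∃ k ∈ K, x = h * k := by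
  have hx' : x ∈ Subgroup.closure ((H : Set G) ∪ K) := by
    rwa [Subgroup.closure_union, Subgroup.closure_eq, Subgroup.closure_eq]
  clear hx
  induction hx' using Subgroup.closure_induction with
  | mem y hy =>
    rcases hy with hy | hy
    · exact ⟨y, hy, 1, one_mem _, (mul_one y).symm⟩
    · exact ⟨1, one_mem _, y, hy, (one_mul y).symm⟩
  | one => exact ⟨1, one_mem _, 1, one_mem _, (one_mul 1).symm⟩
  | mul a b _ _ ha hb =>
    obtain ⟨h1, hh1, k1, hk1, rfl⟩ := ha
    obtain ⟨h2, hh2, k2, hk2, rfl⟩ := hb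
    refine ⟨h1 * h2, mul_mem hh1 hh2, (h2⁻¹ * k1 * h2) * k2,
      mul_mem (by simpa using hc h2⁻¹ (inv_mem hh2) k1 hk1) hk2, by group⟩
  | inv a _ ha =>
    obtain ⟨h, hh, k, hk, rfl⟩ := ha
    exact ⟨h⁻¹, inv_mem hh, h * k⁻¹ * h⁻¹, hc h hh k⁻¹ (inv_mem hk), by group⟩

/-- Let `N ≤ M` be normal subgroups of `G`, and `W ≤ Z` subgroups with
`N ⊓ W = N ⊓ Z` and `M ⊔ W = M ⊔ Z`.  Then `φ(ρ(H)) = H` for every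
`W ≤ H ≤ Z`, where `ρ(H) = (N ⊔ H) ⊓ M` and `φ(K) = (W ⊔ K) ⊓ Z`. -/
theorem phi_rho_eq_self {G : Type*} [Group G]
    (N M : Subgroup G) (hN : N.Normal) (hM : M.Normal) (hNM : N ≤ M)
    (W Z : Subgroup G) (hWZ : W ≤ Z)
    (hmeet : N ⊓ W = N ⊓ Z) (hjoin : M ⊔ W = M ⊔ Z) :
    ∀ H : Subgroup G, W ≤ H → H ≤ Z →
      (W ⊔ ((N ⊔ H) ⊓ M)) ⊓ Z = H := by
  haveI := hN; haveI := hM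
  intro H hWH hHZ
  set K : Subgroup G := (N ⊔ H) ⊓ M with hK
  -- `H ≤ N ⊔ H` normalizes `K = (N ⊔ H) ⊓ M` since `M` is normal in `G`.
  have hnorm : ∀ h ∈ W, ∀ k ∈ K, h * k * h⁻¹ ∈ K := by
    intro h hh k hk
    constructor
    · exact mul_mem (mul_mem (Subgroup.mem_sup_right (hWH hh)) hk.1)
        (inv_mem (Subgroup.mem_sup_right (hWH hh) : h ∈ N ⊔ H) : h⁻¹ ∈ N ⊔ H)
    · exact hM.conj_mem k hk.2 h
  apply le_antisymm
  · rintro x ⟨hx1, hxZ⟩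
    obtain ⟨w, hw, k, hk, rfl⟩ := mem_sup_of_normalizes hnorm hx1
    -- k ∈ K ∩ Z, and k = n * h' with n ∈ N, h' ∈ H
    have hkZ : k ∈ Z := by
      have : w⁻¹ * (w * k) ∈ Z := mul_mem (inv_mem (hWZ hw)) hxZ
      simpa using this
    have hkNH : k ∈ N ⊔ H := hk.1
    rw [← SetLike.mem_coe, Subgroup.normal_mul] at hkNH
    obtain ⟨n, hn, h', hh', rfl⟩ := hkNH
    have hnZ : n ∈ Z := by
      have : (n * h') * h'⁻¹ ∈ Z := mul_mem hkZ (inv_mem (hHZ hh'))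
      simpa using this
    have hnW : n ∈ W := (le_of_eq hmeet.symm ⟨hn, hnZ⟩).2
    exact mul_mem (hWH hw) (mul_mem (hWH hnW) hh')
  · intro h hh
    refine ⟨?_, hHZ hh⟩
    have hMZ : h ∈ M ⊔ W := hjoin ▸ (Subgroup.mem_sup_right (hHZ hh))
    rw [← SetLike.mem_coe, Subgroup.normal_mul] at hMZ
    obtain ⟨m, hm, w, hw, rfl⟩ := hMZ
    have hmK : m ∈ K := by
      refine ⟨?_, hm⟩
      have : (m * w) * w⁻¹ ∈ N ⊔ H :=
        mul_mem (Subgroup.mem_sup_right hh) (inv_mem (Subgroup.mem_sup_right (hWH hw)))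
      simpa using this
    exact mul_mem (Subgroup.mem_sup_right hmK) (Subgroup.mem_sup_left hw)
end

section
/- Let G be a group, let N ≤ M be normal subgroups of G, and let W ≤ Z be subgroups of G satisfying N ⊓ W = N ⊓ Z and M ⊔ W = M ⊔ Z. Let K be a subgroup of G with N ≤ K ≤ M, with W ≤ N_G(K), and with (N ⊔ W) ⊓ M ≤ K ≤ (N ⊔ Z) ⊓ M. Then (N ⊔ ((W ⊔ K) ⊓ Z)) ⊓ M = K. -/
/-!
Both inclusions follow from the Dedekind modular law `(H ⊔ L) ⊓ M = H ⊔ (L ⊓ M)` for `H ≤ M`,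
which holds in the subgroup lattice as soon as `L` normalizes `H`, since then `H ⊔ L = H L`.
For `≤`, the left side lies in `(K ⊔ W) ⊓ M = K ⊔ (W ⊓ M)`, and `W ⊓ M ≤ (N ⊔ W) ⊓ M ≤ K`.
For `≥`, `K = (N ⊔ Z) ⊓ K = N ⊔ (Z ⊓ K)`, and `Z ⊓ K ≤ (W ⊔ K) ⊓ Z`.
-/

namespace Subgroup

theorem sup_inf_assoc_of_le_normalizer {G : Type*} [Group G] {H L M : Subgroup G}
    (hHM : H ≤ M) (hL : L ≤ normalizer (H : Set G)) :
    (H ⊔ L) ⊓ M = H ⊔ (L ⊓ M) := by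
  apply SetLike.coe_injective
  rw [coe_inf, coe_mul_of_right_le_normalizer_left H L hL, ← mul_inf_assoc H L M hHM,
    coe_mul_of_right_le_normalizer_left H (L ⊓ M) (inf_le_left.trans hL)]

end Subgroup

open Subgroup in
theorem rho_phi_eq_self_general {G : Type*} [Group G]
    (N M : Subgroup G) (hN : N.Normal)
    (W Z : Subgroup G)
    (K : Subgroup G) (hNK : N ≤ K) (hKM : K ≤ M)
    (hnorm : W ≤ Subgroup.normalizer (K : Set G))
    (hlow : (N ⊔ W) ⊓ M ≤ K) (hhigh : K ≤ (N ⊔ Z) ⊓ M) :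
    (N ⊔ ((W ⊔ K) ⊓ Z)) ⊓ M = K := by
  apply le_antisymm
  · calc (N ⊔ ((W ⊔ K) ⊓ Z)) ⊓ M
        ≤ (K ⊔ W) ⊓ M := inf_le_inf_right M <|
          sup_le (hNK.trans le_sup_left) (inf_le_left.trans (sup_comm W K).le)
      _ = K ⊔ (W ⊓ M) := sup_inf_assoc_of_le_normalizer hKM hnorm
      _ ≤ K := sup_le le_rfl ((inf_le_inf_right M le_sup_right).trans hlow)
  · refine le_inf ?_ hKM
    calc K = (N ⊔ Z) ⊓ K := (inf_eq_right.mpr (hhigh.trans inf_le_left)).symm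
      _ = N ⊔ (Z ⊓ K) := sup_inf_assoc_of_le_normalizer hNK le_normalizer_of_normal
      _ ≤ N ⊔ ((W ⊔ K) ⊓ Z) := sup_le_sup_left
          (inf_comm Z K ▸ inf_le_inf_right Z le_sup_right) N

/-- Let `N ≤ M` be normal subgroups of `G`, and `W ≤ Z` subgroups with
`N ⊓ W = N ⊓ Z` and `M ⊔ W = M ⊔ Z`.  If `K` is a subgroup with `N ≤ K ≤ M`,
normalized by `W`, and `(N ⊔ W) ⊓ M ≤ K ≤ (N ⊔ Z) ⊓ M`, then `ρ(φ(K)) = K`,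
where `ρ(H) = (N ⊔ H) ⊓ M` and `φ(K) = (W ⊔ K) ⊓ Z`. -/
theorem rho_phi_eq_self {G : Type*} [Group G]
    (N M : Subgroup G) (hN : N.Normal) (hM : M.Normal) (hNM : N ≤ M)
    (W Z : Subgroup G) (hWZ : W ≤ Z)
    (hmeet : N ⊓ W = N ⊓ Z) (hjoin : M ⊔ W = M ⊔ Z)
    (K : Subgroup G) (hNK : N ≤ K) (hKM : K ≤ M)
    (hnorm : W ≤ Subgroup.normalizer (K : Set G))
    (hlow : (N ⊔ W) ⊓ M ≤ K) (hhigh : K ≤ (N ⊔ Z) ⊓ M) :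
    (N ⊔ ((W ⊔ K) ⊓ Z)) ⊓ M = K :=
  rho_phi_eq_self_general N M hN W Z K hNK hKM hnorm hlow hhigh
end

section
/- Let G be a group, let N ≤ M be normal subgroups of G, and let W ≤ Z be subgroups of G satisfying N ⊓ W = N ⊓ Z and M ⊔ W = M ⊔ Z. Then the map ρ(H) = (N ⊔ H) ⊓ M is an order isomorphism from the interval {H : W ≤ H ≤ Z} of the subgroup lattice of G onto the poset {K : ρ(W) ≤ K ≤ ρ(Z) and W ≤ N_G(K)} ordered by inclusion, with order-preserving inverse φ(K) = (W ⊔ K) ⊓ Z. -/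
/-!
The subgroup lattice is not modular; what replaces modularity here is Dedekind's law
`(A ⊔ B) ⊓ C = A ⊔ (B ⊓ C)` for `A ≤ C`, valid as soon as `A ⊔ B` is the product set `A * B`,
e.g. when `B` is normal or `B` normalizes `A`. Each inclusion in `φ (ρ H) = H` and `ρ (φ K) = K`
is one application of this law, after which `N ⊓ W = N ⊓ Z`, `M ⊔ W = M ⊔ Z` or
`(N ⊔ W) ⊓ M ≤ K` absorbs the extra term.
-/

open Pointwise

namespace Subgroup

variable {G : Type*} [Group G]

theorem sup_inf_assoc_of_coe_sup_eq_mul {A B C : Subgroup G} (hAC : A ≤ C)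
    (hAB : ((A ⊔ B : Subgroup G) : Set G) = A * B) : (A ⊔ B) ⊓ C = A ⊔ (B ⊓ C) := by
  refine le_antisymm (fun x hx => ?_)
    (le_inf (sup_le_sup_left inf_le_left A) (sup_le hAC inf_le_right))
  have hx' : x ∈ (A : Set G) * ↑(B ⊓ C) := by
    rw [mul_inf_assoc A B C hAC, ← hAB]
    exact hx
  obtain ⟨a, ha, b, hb, rfl⟩ := hx'
  exact mul_mem_sup ha hb

theorem le_normalizer_sup_inf (N M H : Subgroup G) [N.Normal] [M.Normal] :
    H ≤ normalizer (((N ⊔ H) ⊓ M : Subgroup G) : Set G) := by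
  refine le_trans (le_inf ?_ le_normalizer_of_normal) inf_normalizer_le_normalizer_inf
  exact le_trans (le_inf le_normalizer_of_normal le_normalizer)
    (normalizer_inf_normalizer_le_normalizer_sup N H)

variable {N M W Z : Subgroup G}

theorem sup_sup_inf_inf_eq_of_le_of_le [N.Normal] [M.Normal]
    (hmeet : N ⊓ W = N ⊓ Z) (hjoin : M ⊔ W = M ⊔ Z)
    {H : Subgroup G} (hWH : W ≤ H) (hHZ : H ≤ Z) :
    (W ⊔ (N ⊔ H) ⊓ M) ⊓ Z = H := by
  apply le_antisymm
  · calc (W ⊔ (N ⊔ H) ⊓ M) ⊓ Z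
        ≤ (H ⊔ N) ⊓ Z := inf_le_inf_right Z
          (sup_le (hWH.trans le_sup_left) (inf_le_left.trans (sup_comm N H).le))
      _ = H ⊔ N ⊓ W := by rw [sup_inf_assoc_of_coe_sup_eq_mul hHZ (mul_normal H N), hmeet]
      _ = H := sup_eq_left.mpr (inf_le_right.trans hWH)
  · have hZ : Z ≤ W ⊔ M := by
      rw [sup_comm, hjoin]
      exact le_sup_right
    refine le_inf ?_ hHZ
    calc H ≤ (W ⊔ M) ⊓ H := le_inf (hHZ.trans hZ) le_rfl
      _ = W ⊔ M ⊓ H := sup_inf_assoc_of_coe_sup_eq_mul hWH (mul_normal W M)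
      _ ≤ W ⊔ (N ⊔ H) ⊓ M :=
        sup_le_sup_left (le_inf (inf_le_right.trans le_sup_right) inf_le_left) W

theorem sup_sup_inf_inf_eq_of_le_normalizer [N.Normal] (hNM : N ≤ M) {K : Subgroup G}
    (hlow : (N ⊔ W) ⊓ M ≤ K) (hup : K ≤ (N ⊔ Z) ⊓ M) (hWK : W ≤ normalizer (K : Set G)) :
    (N ⊔ (W ⊔ K) ⊓ Z) ⊓ M = K := by
  have hNK : N ≤ K := (le_inf le_sup_left hNM).trans hlow
  have hKM : K ≤ M := hup.trans inf_le_right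
  apply le_antisymm
  · calc (N ⊔ (W ⊔ K) ⊓ Z) ⊓ M
        ≤ (K ⊔ W) ⊓ M := inf_le_inf_right M
          (sup_le (hNK.trans le_sup_left) (inf_le_left.trans (sup_comm W K).le))
      _ = K ⊔ W ⊓ M :=
        sup_inf_assoc_of_coe_sup_eq_mul hKM (coe_mul_of_right_le_normalizer_left K W hWK)
      _ = K := sup_eq_left.mpr ((inf_le_inf_right M le_sup_right).trans hlow)
  · refine le_inf ?_ hKM
    calc K ≤ (N ⊔ Z) ⊓ K := le_inf (hup.trans inf_le_left) le_rfl
      _ = N ⊔ Z ⊓ K := sup_inf_assoc_of_coe_sup_eq_mul hNK (normal_mul N Z)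
      _ ≤ N ⊔ (W ⊔ K) ⊓ Z :=
        sup_le_sup_left (le_inf (inf_le_right.trans le_sup_right) inf_le_left) N

end Subgroup

/-- Let `N ≤ M` be normal subgroups of `G`, and `W ≤ Z` subgroups with
`N ⊓ W = N ⊓ Z` and `M ⊔ W = M ⊔ Z`.  The projection `ρ(H) = (N ⊔ H) ⊓ M`
is an order isomorphism from the interval `[W, Z]` of the subgroup lattice
onto the poset of subgroups `K` with `ρ(W) ≤ K ≤ ρ(Z)` normalized by `W`,
with inverse `φ(K) = (W ⊔ K) ⊓ Z`. -/
theorem projection_orderIso {G : Type*} [Group G]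
    (N M : Subgroup G) (hN : N.Normal) (hM : M.Normal) (hNM : N ≤ M)
    (W Z : Subgroup G) (hWZ : W ≤ Z)
    (hmeet : N ⊓ W = N ⊓ Z) (hjoin : M ⊔ W = M ⊔ Z) :
    ∃ e : {H : Subgroup G // W ≤ H ∧ H ≤ Z} ≃o
        {K : Subgroup G // (N ⊔ W) ⊓ M ≤ K ∧ K ≤ (N ⊔ Z) ⊓ M ∧ W ≤ Subgroup.normalizer (K : Set G)},
      (∀ H : {H : Subgroup G // W ≤ H ∧ H ≤ Z}, (e H : Subgroup G) = (N ⊔ (H : Subgroup G)) ⊓ M) ∧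
      (∀ K : {K : Subgroup G // (N ⊔ W) ⊓ M ≤ K ∧ K ≤ (N ⊔ Z) ⊓ M ∧ W ≤ Subgroup.normalizer (K : Set G)},
        (e.symm K : Subgroup G) = (W ⊔ (K : Subgroup G)) ⊓ Z) := by
  let e : {H : Subgroup G // W ≤ H ∧ H ≤ Z} ≃
      {K : Subgroup G // (N ⊔ W) ⊓ M ≤ K ∧ K ≤ (N ⊔ Z) ⊓ M ∧ W ≤ Subgroup.normalizer (K : Set G)} :=
    { toFun := fun H => ⟨(N ⊔ H.1) ⊓ M, by gcongr; exact H.2.1, by gcongr; exact H.2.2,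
        H.2.1.trans (Subgroup.le_normalizer_sup_inf N M H.1)⟩
      invFun := fun K => ⟨(W ⊔ K.1) ⊓ Z, le_inf le_sup_left hWZ, inf_le_right⟩
      left_inv := fun H =>
        Subtype.ext (Subgroup.sup_sup_inf_inf_eq_of_le_of_le hmeet hjoin H.2.1 H.2.2)
      right_inv := fun K =>
        Subtype.ext (Subgroup.sup_sup_inf_inf_eq_of_le_normalizer hNM K.2.1 K.2.2.1 K.2.2.2) }
  exact ⟨e.toOrderIso (fun _ _ h => inf_le_inf_right M (sup_le_sup_left h N))
    (fun _ _ h => inf_le_inf_right Z (sup_le_sup_left h W)), fun _ => rfl, fun _ => rfl⟩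
end

section
/- Let G be a group and let N ≤ M be normal subgroups of G. Suppose E ⋖ F is a cover relation in the subgroup lattice of G that is weakly separated by M/N, i.e. N ⊓ E = N ⊓ F and M ⊔ E = M ⊔ F. Set ρ(E) = (N ⊔ E) ⊓ M and ρ(F) = (N ⊔ F) ⊓ M. Then ρ(E) < ρ(F), and for every subgroup K of G with ρ(E) ≤ K ≤ ρ(F) and E ≤ N_G(K), either K = ρ(E) or K = ρ(F); that is, ρ(E) ⋖ ρ(F) is a cover relation in the lattice of E-normalized subgroups between N and M. -/
/-!
Everything reduces to Dedekind's modular law `(A ⊔ B) ⊓ C = A ⊔ (B ⊓ C)` for `A ≤ C`, which holds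
in the subgroup lattice whenever `A ⊔ B = AB`, e.g. when `A` or `B` is normal or `B` normalizes `A`.
If `ρ(F) ≤ ρ(E)`, the law with `M` and then `N` gives `F = E ⊔ (M ⊓ F) ≤ E ⊔ (N ⊓ F) = E`.
For an `E`-normalized `K` between `ρ(E)` and `ρ(F)`, the subgroup `(K ⊔ E) ⊓ F` lies between `E`
and `F`: if it is `E`, then `K = N ⊔ (F ⊓ K) ≤ N ⊔ E`; if it is `F`, then
`ρ(F) ≤ (K ⊔ E) ⊓ M = K ⊔ (E ⊓ M) = K`.
-/

open scoped Pointwise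

namespace Subgroup

variable {G : Type*} [Group G]

theorem sup_inf_eq_of_coe_sup_eq_mul {A B C : Subgroup G} (hAC : A ≤ C)
    (hAB : ((A ⊔ B : Subgroup G) : Set G) = (A : Set G) * (B : Set G)) :
    (A ⊔ B) ⊓ C = A ⊔ B ⊓ C := by
  refine le_antisymm ?_ (le_inf (sup_le_sup_left inf_le_left A) (sup_le hAC inf_le_right))
  rw [← SetLike.coe_subset_coe, coe_inf, hAB, ← mul_inf_assoc A B C hAC]
  rintro _ ⟨a, ha, b, hb, rfl⟩
  exact mul_mem (mem_sup_left ha) (mem_sup_right hb)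

theorem le_of_sup_inf_le_sup_inf {N M E F : Subgroup G} [N.Normal] [M.Normal] (hEF : E ≤ F)
    (hmeet : N ⊓ E = N ⊓ F) (hjoin : M ⊔ E = M ⊔ F) (hρ : (N ⊔ F) ⊓ M ≤ (N ⊔ E) ⊓ M) :
    F ≤ E := by
  have hMF : M ⊓ F ≤ (N ⊔ E) ⊓ M := (le_inf (inf_le_right.trans le_sup_right) inf_le_left).trans hρ
  have hMFE : M ⊓ F ≤ E :=
    calc M ⊓ F ≤ (N ⊔ E) ⊓ F := le_inf (hMF.trans inf_le_left) inf_le_right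
      _ = E ⊔ N ⊓ F := by rw [sup_comm, sup_inf_eq_of_coe_sup_eq_mul hEF (mul_normal E N)]
      _ = E := by rw [← hmeet, inf_comm, sup_eq_left.mpr inf_le_left]
  calc F = (E ⊔ M) ⊓ F := by rw [sup_comm, hjoin, inf_eq_right.mpr le_sup_right]
    _ = E ⊔ M ⊓ F := sup_inf_eq_of_coe_sup_eq_mul hEF (mul_normal E M)
    _ ≤ E := sup_le le_rfl hMFE

theorem le_sup_of_sup_inf_eq_left {N E F K : Subgroup G} [N.Normal] (hNK : N ≤ K)
    (hKF : K ≤ N ⊔ F) (hE : (K ⊔ E) ⊓ F = E) : K ≤ N ⊔ E :=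
  calc K = (N ⊔ F) ⊓ K := (inf_eq_right.mpr hKF).symm
    _ = N ⊔ F ⊓ K := sup_inf_eq_of_coe_sup_eq_mul hNK (normal_mul N F)
    _ ≤ N ⊔ E := sup_le_sup_left ((inf_comm F K).trans_le (hE ▸ inf_le_inf_right F le_sup_left)) N

theorem sup_inf_le_of_sup_inf_eq_right {N M E F K : Subgroup G} (hNK : N ≤ K) (hKM : K ≤ M)
    (hEM : E ⊓ M ≤ K) (hnorm : E ≤ normalizer (K : Set G)) (hF : (K ⊔ E) ⊓ F = F) :
    (N ⊔ F) ⊓ M ≤ K :=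
  calc (N ⊔ F) ⊓ M ≤ (K ⊔ E) ⊓ M :=
        inf_le_inf_right M (sup_le (hNK.trans le_sup_left) (hF ▸ inf_le_left))
    _ = K ⊔ E ⊓ M :=
        sup_inf_eq_of_coe_sup_eq_mul hKM (coe_mul_of_right_le_normalizer_left K E hnorm)
    _ = K := sup_eq_left.mpr hEM

end Subgroup

/-- If `E ⋖ F` is a cover relation in the subgroup lattice of `G` weakly
separated by `M/N` (for normal subgroups `N ≤ M`), then
`ρ(E) ⋖ ρ(F)` is a cover relation in the lattice of `E`-normalized subgroups
between `N` and `M`, where `ρ(H) = (N ⊔ H) ⊓ M`. -/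
theorem projection_covers {G : Type*} [Group G]
    (N M : Subgroup G) (hN : N.Normal) (hM : M.Normal) (hNM : N ≤ M)
    (E F : Subgroup G) (hcov : E ⋖ F)
    (hmeet : N ⊓ E = N ⊓ F) (hjoin : M ⊔ E = M ⊔ F) :
    (N ⊔ E) ⊓ M < (N ⊔ F) ⊓ M ∧
      ∀ K : Subgroup G, (N ⊔ E) ⊓ M ≤ K → K ≤ (N ⊔ F) ⊓ M →
        E ≤ Subgroup.normalizer (K : Set G) → K = (N ⊔ E) ⊓ M ∨ K = (N ⊔ F) ⊓ M := by
  have hEF : E ≤ F := hcov.le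
  refine ⟨lt_of_le_not_ge (inf_le_inf_right M (sup_le_sup_left hEF N)) fun hρ =>
    hcov.lt.not_ge (Subgroup.le_of_sup_inf_le_sup_inf hEF hmeet hjoin hρ), ?_⟩
  intro K hEK hKF hnorm
  have hNK : N ≤ K := (le_inf le_sup_left hNM).trans hEK
  rcases hcov.eq_or_eq (le_inf le_sup_right hEF : E ≤ (K ⊔ E) ⊓ F) inf_le_right with hL | hL
  · exact .inl <| le_antisymm
      (le_inf (Subgroup.le_sup_of_sup_inf_eq_left hNK (hKF.trans inf_le_left) hL)
        (hKF.trans inf_le_right)) hEK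
  · exact .inr <| le_antisymm hKF <| Subgroup.sup_inf_le_of_sup_inf_eq_right hNK
      (hKF.trans inf_le_right) ((inf_le_inf_right M le_sup_right).trans hEK) hnorm hL
end
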